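/- Uniqueness of the Shapley value: any map ψ assigning to each game v : Finset (Fin d) → ℝ (with v(∅)=0) a vector ψ(v) ∈ ℝ^d that satisfies efficiency, linearity, the null player property, and symmetry must equal the Shapley value φ. -/

import Mathlib

/-!
Both `ψ` and the Shapley value are linear on games vanishing at `∅`, and every such game is a
combination of the unanimity games `u_T` (`T ≠ ∅`), the coefficients being the Harsanyi dividends
(the Möbius transform of `v` on the subset lattice). So it suffices to compare the two values on
each `u_T`. There the axioms leave no choice: players outside `T` are null, players in `T` are
symmetric, and efficiency makes their common value `1 / |T|`. The Shapley formula gives the same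
numbers: for `j ∈ T` it sums the weights `|S|! (d - |S| - 1)! / d!` over `T \ {j} ⊆ S ⊆ [d] \ {j}`,
which is `1 / |T|` by the hockey-stick identity.
-/

open Finset

noncomputable def shapley (d : ℕ) (v : Finset (Fin d) → ℝ) (j : Fin d) : ℝ :=
  ∑ S ∈ (Finset.univ.erase j).powerset,
    ((Nat.factorial S.card * Nat.factorial (d - S.card - 1) : ℝ) / (Nat.factorial d : ℝ)) *
      (v (insert j S) - v S)

namespace Finset

variable {ι M : Type*} [DecidableEq ι] [AddCommMonoid M]

theorem sum_Icc_apply_card (f : ℕ → M) {s t : Finset ι} (h : s ⊆ t) :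
    ∑ u ∈ Icc s t, f #u = ∑ i ∈ range (#(t \ s) + 1), (#(t \ s)).choose i • f (#s + i) := by
  have hdisj : ∀ B ∈ (t \ s).powerset, Disjoint s B := fun B hB =>
    disjoint_sdiff.mono_right (mem_powerset.1 hB)
  rw [Icc_eq_image_powerset h, sum_image fun B hB C hC hBC => by
    rw [← union_sdiff_cancel_left (hdisj B hB), ← union_sdiff_cancel_left (hdisj C hC)]
    exact congrArg (· \ s) hBC]
  rw [sum_congr rfl fun B hB => by rw [card_union_of_disjoint (hdisj B hB)]]
  exact sum_powerset_apply_card fun n => f (#s + n)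

end Finset

open Nat in
theorem Nat.succ_mul_sum_choose_mul_factorial_mul_factorial (k m : ℕ) :
    (k + 1) * ∑ i ∈ Finset.range (m + 1), m.choose i * (k + i)! * (m - i)! = (k + m + 1)! := by
  have hterm : ∀ i ∈ Finset.range (m + 1),
      m.choose i * (k + i)! * (m - i)! = m ! * k ! * (i + k).choose k := by
    intro i hi
    refine Nat.eq_of_mul_eq_mul_right (Nat.factorial_pos i) ?_
    have hm := Nat.choose_mul_factorial_mul_factorial (Nat.lt_succ_iff.1 (Finset.mem_range.1 hi))
    have hk := Nat.add_choose_mul_factorial_mul_factorial i k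
    rw [add_comm k i, ← hk, ← hm]
    ring
  rw [Finset.sum_congr rfl hterm, ← Finset.mul_sum, Nat.sum_range_add_choose]
  calc (k + 1) * (m ! * k ! * (m + k + 1).choose (k + 1))
      = (m + (k + 1)).choose (k + 1) * m ! * (k + 1)! := by rw [Nat.factorial_succ]; ring_nf
    _ = (k + m + 1)! := by rw [Nat.add_choose_mul_factorial_mul_factorial]; ring_nf

section Games

variable {ι : Type*} [DecidableEq ι]

def unanimityGame (T S : Finset ι) : ℝ := if T ⊆ S then 1 else 0

lemma unanimityGame_empty {T : Finset ι} (hT : T.Nonempty) : unanimityGame T ∅ = 0 := by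
  simp [unanimityGame, hT.ne_empty]

lemma unanimityGame_of_notMem {T S : Finset ι} {k : ι} (hkT : k ∈ T) (hkS : k ∉ S) :
    unanimityGame T S = 0 :=
  if_neg fun hTS => hkS (hTS hkT)

lemma unanimityGame_insert_of_notMem {T : Finset ι} {j : ι} (hj : j ∉ T) (S : Finset ι) :
    unanimityGame T (insert j S) = unanimityGame T S := by
  simp [unanimityGame, subset_insert_iff_of_notMem hj]

lemma unanimityGame_insert_sub {T S : Finset ι} {j : ι} (hjT : j ∈ T) (hjS : j ∉ S) :
    unanimityGame T (insert j S) - unanimityGame T S = unanimityGame (T.erase j) S := by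
  rw [unanimityGame_of_notMem hjT hjS, sub_zero]
  simp only [unanimityGame, subset_insert_iff]

open IncidenceAlgebra in
noncomputable def harsanyiDividend (v : Finset ι → ℝ) (T : Finset ι) : ℝ :=
  ∑ A ∈ Iic T, mu ℝ A T * v A

open IncidenceAlgebra in
lemma sum_Iic_harsanyiDividend (v : Finset ι → ℝ) (S : Finset ι) :
    ∑ T ∈ Iic S, harsanyiDividend v T = v S := by
  unfold harsanyiDividend
  rw [sum_comm' (t' := Iic S) (s' := fun A => Icc A S) fun T A => by
    simp only [mem_Iic, mem_Icc]
    exact ⟨fun ⟨hTS, hAT⟩ => ⟨⟨hAT, hTS⟩, hAT.trans hTS⟩, fun ⟨⟨hAT, hTS⟩, _⟩ => ⟨hTS, hAT⟩⟩]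
  simp_rw [← sum_mul, sum_Icc_mu_right, ite_mul, one_mul, zero_mul]
  simp

lemma sum_harsanyiDividend_mul_unanimityGame [Fintype ι] {v : Finset ι → ℝ} (hv : v ∅ = 0)
    (S : Finset ι) :
    ∑ T ∈ univ.erase ∅, harsanyiDividend v T * unanimityGame T S = v S := by
  have hdiv_empty : harsanyiDividend v ∅ = 0 := by
    simpa [Iic_eq_powerset, hv] using sum_Iic_harsanyiDividend v ∅
  rw [← sum_Iic_harsanyiDividend v S, sum_erase _ (by simp [hdiv_empty])]
  simp only [unanimityGame, mul_ite, mul_one, mul_zero, ← sum_filter]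
  congr 1
  ext T
  simp

end Games

namespace GameValue

variable {ι : Type*} (ψ : (Finset ι → ℝ) → ι → ℝ)

def IsLinear : Prop :=
  ∀ (a b : ℝ) (v₁ v₂ : Finset ι → ℝ), v₁ ∅ = 0 → v₂ ∅ = 0 →
    ∀ j : ι, ψ (fun S => a * v₁ S + b * v₂ S) j = a * ψ v₁ j + b * ψ v₂ j

def IsEfficient [Fintype ι] : Prop :=
  ∀ v : Finset ι → ℝ, v ∅ = 0 → ∑ j : ι, ψ v j = v Finset.univ

def HasNullPlayerProperty [DecidableEq ι] : Prop :=
  ∀ v : Finset ι → ℝ, v ∅ = 0 →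
    ∀ j : ι, (∀ S : Finset ι, j ∉ S → v (insert j S) = v S) → ψ v j = 0

def IsSymmetric [DecidableEq ι] : Prop :=
  ∀ v : Finset ι → ℝ, v ∅ = 0 → ∀ j k : ι, j ≠ k →
    (∀ S : Finset ι, j ∉ S → k ∉ S → v (insert j S) = v (insert k S)) → ψ v j = ψ v k

variable {ψ}

theorem IsLinear.apply_sum (hψ : IsLinear ψ) {κ : Type*} (P : Finset κ) (c : κ → ℝ)
    (w : κ → Finset ι → ℝ) (hw : ∀ t ∈ P, w t ∅ = 0) (j : ι) :
    ψ (fun S => ∑ t ∈ P, c t * w t S) j = ∑ t ∈ P, c t * ψ (w t) j := by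
  classical
  induction P using Finset.induction_on with
  | empty => simpa using hψ 0 0 (fun _ => 0) (fun _ => 0) rfl rfl j
  | insert t P ht ih =>
    have hwP : ∀ s ∈ P, w s ∅ = 0 := fun s hs => hw s (mem_insert_of_mem hs)
    have hsumP : ∑ s ∈ P, c s * w s ∅ = 0 := sum_eq_zero fun s hs => by rw [hwP s hs, mul_zero]
    have := hψ (c t) 1 (w t) (fun S => ∑ s ∈ P, c s * w s S) (hw t (mem_insert_self t P)) hsumP j
    simp only [one_mul, ih hwP] at this
    simpa only [sum_insert ht] using this

variable [DecidableEq ι]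

theorem eq_of_isLinear_of_eq_on_unanimityGame [Fintype ι] {φ : (Finset ι → ℝ) → ι → ℝ}
    (hψ : IsLinear ψ) (hφ : IsLinear φ)
    (h : ∀ T : Finset ι, T.Nonempty → ψ (unanimityGame T) = φ (unanimityGame T))
    {v : Finset ι → ℝ} (hv : v ∅ = 0) : ψ v = φ v := by
  have hdecomp : v = fun S => ∑ T ∈ univ.erase ∅, harsanyiDividend v T * unanimityGame T S :=
    funext fun S => (sum_harsanyiDividend_mul_unanimityGame hv S).symm
  have hunan : ∀ T ∈ univ.erase (∅ : Finset ι), unanimityGame T ∅ = 0 := fun T hT =>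
    unanimityGame_empty (nonempty_iff_ne_empty.2 (ne_of_mem_erase hT))
  funext j
  rw [hdecomp, hψ.apply_sum _ _ _ hunan, hφ.apply_sum _ _ _ hunan]
  refine sum_congr rfl fun T hT => ?_
  rw [h T (nonempty_iff_ne_empty.2 (ne_of_mem_erase hT))]

theorem apply_unanimityGame_of_notMem (hnull : HasNullPlayerProperty ψ) {T : Finset ι}
    (hT : T.Nonempty) {j : ι} (hj : j ∉ T) : ψ (unanimityGame T) j = 0 :=
  hnull _ (unanimityGame_empty hT) j fun S _ => unanimityGame_insert_of_notMem hj S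

theorem apply_unanimityGame_eq_of_mem (hsym : IsSymmetric ψ) {T : Finset ι} {j k : ι}
    (hj : j ∈ T) (hk : k ∈ T) : ψ (unanimityGame T) j = ψ (unanimityGame T) k := by
  rcases eq_or_ne j k with rfl | hjk
  · rfl
  refine hsym _ (unanimityGame_empty ⟨j, hj⟩) j k hjk fun S hjS hkS => ?_
  rw [unanimityGame_of_notMem hk (by simp [hjk.symm, hkS]),
    unanimityGame_of_notMem hj (by simp [hjk, hjS])]

theorem apply_unanimityGame_of_mem [Fintype ι] (heff : IsEfficient ψ)
    (hnull : HasNullPlayerProperty ψ) (hsym : IsSymmetric ψ) {T : Finset ι} {j : ι}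
    (hj : j ∈ T) : ψ (unanimityGame T) j = 1 / #T := by
  have hT : T.Nonempty := ⟨j, hj⟩
  have htotal : ∑ k ∈ T, ψ (unanimityGame T) k = 1 := by
    rw [sum_subset (subset_univ T) fun k _ hk => apply_unanimityGame_of_notMem hnull hT hk,
      heff _ (unanimityGame_empty hT)]
    exact if_pos (subset_univ T)
  rw [sum_congr rfl fun k hk => apply_unanimityGame_eq_of_mem hsym hk hj, sum_const,
    nsmul_eq_mul] at htotal
  rw [eq_div_iff (by exact_mod_cast hT.card_ne_zero), mul_comm, htotal]

end GameValue

theorem shapley_isLinear (d : ℕ) : GameValue.IsLinear (shapley d) := by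
  intro a b v₁ v₂ _ _ j
  simp only [shapley, mul_sum, ← sum_add_distrib]
  refine sum_congr rfl fun S _ => ?_
  ring

theorem shapley_eq_zero_of_null {d : ℕ} {v : Finset (Fin d) → ℝ} {j : Fin d}
    (hj : ∀ S : Finset (Fin d), j ∉ S → v (insert j S) = v S) : shapley d v j = 0 :=
  sum_eq_zero fun S hS => by
    rw [hj S fun h => notMem_erase j univ (mem_powerset.1 hS h), sub_self, mul_zero]

theorem sum_range_choose_mul_factorial_div (k m : ℕ) :
    ∑ i ∈ range (m + 1), (m.choose i : ℝ) *
      ((Nat.factorial (k + i) * Nat.factorial (m - i) : ℝ) / Nat.factorial (k + m + 1))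
      = 1 / (k + 1) := by
  have hpos : (Nat.factorial (k + m + 1) : ℝ) ≠ 0 := by positivity
  simp_rw [← mul_div_assoc]
  rw [← sum_div, div_eq_div_iff hpos (by positivity), one_mul, mul_comm,
    ← Nat.succ_mul_sum_choose_mul_factorial_mul_factorial k m]
  push_cast
  simp only [mul_assoc]

theorem shapley_unanimityGame_of_mem {d : ℕ} {T : Finset (Fin d)} {j : Fin d} (hj : j ∈ T) :
    shapley d (unanimityGame T) j = 1 / #T := by
  have hsub : T.erase j ⊆ univ.erase j := erase_subset_erase j (subset_univ T)
  have hcompl : univ.erase j \ T.erase j = univ \ T := by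
    ext k
    by_cases hkj : k = j <;> simp [hkj, hj]
  have hcard : #(univ \ T) = d - #T := by
    rw [card_sdiff_of_subset (subset_univ T), card_univ, Fintype.card_fin]
  have hTd : #T ≤ d := by simpa using card_le_univ T
  obtain ⟨k, hk⟩ : ∃ k, #T = k + 1 := Nat.exists_eq_succ_of_ne_zero (card_ne_zero_of_mem hj)
  obtain ⟨m, hm⟩ : ∃ m, d = k + m + 1 := ⟨d - #T, by omega⟩
  calc shapley d (unanimityGame T) j
      = ∑ S ∈ Icc (T.erase j) (univ.erase j),
          (Nat.factorial #S * Nat.factorial (d - #S - 1) : ℝ) / Nat.factorial d := by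
        rw [shapley, Icc_eq_filter_powerset, sum_filter]
        refine sum_congr rfl fun S hS => ?_
        rw [unanimityGame_insert_sub hj fun h => notMem_erase j univ (mem_powerset.1 hS h)]
        simp [unanimityGame]
    _ = ∑ i ∈ range (m + 1), (m.choose i : ℝ) *
          ((Nat.factorial (k + i) * Nat.factorial (m - i) : ℝ) / Nat.factorial (k + m + 1)) := by
        rw [sum_Icc_apply_card (fun n => (Nat.factorial n * Nat.factorial (d - n - 1) : ℝ) /
          Nat.factorial d) hsub, hcompl, hcard, card_erase_of_mem hj, hk, hm,
          show k + m + 1 - (k + 1) = m by omega, Nat.add_sub_cancel]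
        refine sum_congr rfl fun i hi => ?_
        rw [nsmul_eq_mul, show k + m + 1 - (k + i) - 1 = m - i by omega]
    _ = 1 / #T := by rw [sum_range_choose_mul_factorial_div, hk]; push_cast; rfl

theorem shapley_unique_general (d : ℕ)
    (ψ : (Finset (Fin d) → ℝ) → Fin d → ℝ)
    (heff : ∀ v : Finset (Fin d) → ℝ, v ∅ = 0 → ∑ j : Fin d, ψ v j = v Finset.univ)
    (hlin : ∀ (a b : ℝ) (v₁ v₂ : Finset (Fin d) → ℝ), v₁ ∅ = 0 → v₂ ∅ = 0 →
      ∀ j : Fin d, ψ (fun S => a * v₁ S + b * v₂ S) j = a * ψ v₁ j + b * ψ v₂ j)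
    (hnull : ∀ (v : Finset (Fin d) → ℝ), v ∅ = 0 →
      ∀ j : Fin d, (∀ S : Finset (Fin d), j ∉ S → v (insert j S) = v S) → ψ v j = 0)
    (hsym : ∀ (v : Finset (Fin d) → ℝ), v ∅ = 0 → ∀ j k : Fin d, j ≠ k →
      (∀ S : Finset (Fin d), j ∉ S → k ∉ S → v (insert j S) = v (insert k S)) →
      ψ v j = ψ v k) :
    ∀ v : Finset (Fin d) → ℝ, v ∅ = 0 → ∀ j : Fin d, ψ v j = shapley d v j := by
  intro v hv
  refine congrFun (GameValue.eq_of_isLinear_of_eq_on_unanimityGame hlin (shapley_isLinear d)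
    (fun T hT => funext fun k => ?_) hv)
  by_cases hk : k ∈ T
  · rw [GameValue.apply_unanimityGame_of_mem heff hnull hsym hk, shapley_unanimityGame_of_mem hk]
  · rw [GameValue.apply_unanimityGame_of_notMem hnull hT hk,
      shapley_eq_zero_of_null fun S _ => unanimityGame_insert_of_notMem hk S]

theorem shapley_unique (d : ℕ) (hd : 0 < d)
    (ψ : (Finset (Fin d) → ℝ) → Fin d → ℝ)
    (heff : ∀ v : Finset (Fin d) → ℝ, v ∅ = 0 → ∑ j : Fin d, ψ v j = v Finset.univ)
    (hlin : ∀ (a b : ℝ) (v₁ v₂ : Finset (Fin d) → ℝ), v₁ ∅ = 0 → v₂ ∅ = 0 →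
      ∀ j : Fin d, ψ (fun S => a * v₁ S + b * v₂ S) j = a * ψ v₁ j + b * ψ v₂ j)
    (hnull : ∀ (v : Finset (Fin d) → ℝ), v ∅ = 0 →
      ∀ j : Fin d, (∀ S : Finset (Fin d), j ∉ S → v (insert j S) = v S) → ψ v j = 0)
    (hsym : ∀ (v : Finset (Fin d) → ℝ), v ∅ = 0 → ∀ j k : Fin d, j ≠ k →
      (∀ S : Finset (Fin d), j ∉ S → k ∉ S → v (insert j S) = v (insert k S)) →
      ψ v j = ψ v k) :
    ∀ v : Finset (Fin d) → ℝ, v ∅ = 0 → ∀ j : Fin d, ψ v j = shapley d v j :=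
  shapley_unique_general d ψ heff hlin hnull hsym
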